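/- arXiv:0911.0336 — 3 statements merged into one kernel-verified Lean document; each statement's English description precedes it below -/
import Mathlib

section
/- For λ ∈ (-1,1), the real vector space of 4×4 real symmetric matrices Θ satisfying H(λ)ᵀΘ = ΘH(λ) with the 4×4 discrete square-well Hamiltonian H(λ) has dimension exactly 4. -/
open Matrix Polynomial

/-- The N×N discrete PT-symmetric square-well Hamiltonian (0-indexed). -/
noncomputable def Ham (N : ℕ) (l : ℝ) : Matrix (Fin N) (Fin N) ℝ :=
  Matrix.of fun i j =>
    if (i : ℕ) = j then 2
    else if (j : ℕ) = (i : ℕ) + 1 then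
      (if (i : ℕ) = 0 then -1 - l else if (j : ℕ) = N - 1 then -1 + l else -1)
    else if (i : ℕ) = (j : ℕ) + 1 then
      (if (j : ℕ) = 0 then -1 + l else if (i : ℕ) = N - 1 then -1 - l else -1)
    else 0

/-- The real vector space of symmetric solutions Θ of H(λ)ᵀ Θ = Θ H(λ). -/
noncomputable def solSpace (N : ℕ) (l : ℝ) : Submodule ℝ (Matrix (Fin N) (Fin N) ℝ) where
  carrier := {Θ | Θ.IsSymm ∧ (Ham N l)ᵀ * Θ = Θ * Ham N l}
  add_mem' := by
    rintro a b ⟨ha1, ha2⟩ ⟨hb1, hb2⟩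
    refine ⟨?_, ?_⟩
    · show (a + b)ᵀ = a + b
      rw [Matrix.transpose_add, ha1, hb1]
    · rw [Matrix.mul_add, Matrix.add_mul, ha2, hb2]
  zero_mem' := by
    refine ⟨?_, by simp⟩
    show (0 : Matrix (Fin N) (Fin N) ℝ)ᵀ = 0
    simp
  smul_mem' := by
    rintro c a ⟨ha1, ha2⟩
    refine ⟨?_, ?_⟩
    · show (c • a)ᵀ = c • a
      rw [Matrix.transpose_smul, ha1]
    · rw [Matrix.mul_smul, Matrix.smul_mul, ha2]


/-!
The symmetric solutions of `H(λ)ᵀ Θ = Θ H(λ)` form a linear system in the entries of `Θ`. For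
`λ ≠ ±1` this system determines `Θ` from the four entries `Θ 1 2, Θ 2 2, Θ 2 3, Θ 3 3`, and every
choice of these four values extends to a solution (an explicit persymmetric matrix), so reading off
these entries is a linear isomorphism from the solution space onto `ℝ⁴`.
-/

lemma Ham_four (l : ℝ) :
    Ham 4 l = !![2, -1 - l, 0, 0; -1 + l, 2, -1, 0; 0, -1, 2, -1 + l; 0, 0, -1 - l, 2] := by
  ext i j
  fin_cases i <;> fin_cases j <;> simp [Ham]

lemma mem_solSpace_iff {N : ℕ} {l : ℝ} {Θ : Matrix (Fin N) (Fin N) ℝ} :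
    Θ ∈ solSpace N l ↔ Θ.IsSymm ∧ (Ham N l)ᵀ * Θ = Θ * Ham N l :=
  Iff.rfl

noncomputable def solCoords : Matrix (Fin 4) (Fin 4) ℝ →ₗ[ℝ] (Fin 4 → ℝ) :=
  LinearMap.pi ![entryLinearMap ℝ ℝ 1 2, entryLinearMap ℝ ℝ 2 2,
    entryLinearMap ℝ ℝ 2 3, entryLinearMap ℝ ℝ 3 3]

noncomputable def solMat (l : ℝ) (v : Fin 4 → ℝ) : Matrix (Fin 4) (Fin 4) ℝ :=
  let e := v 1 * (1 - l) - v 3 * (1 + l)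
  let f := ((1 - l) * v 0 - v 2) / (1 + l)
  !![v 3, v 2, e, f;
     v 2, v 1, v 0, e;
     e, v 0, v 1, v 2;
     f, e, v 2, v 3]

lemma solCoords_solMat (l : ℝ) (v : Fin 4 → ℝ) : solCoords (solMat l v) = v := by
  ext i
  fin_cases i <;> rfl

lemma solMat_mem_solSpace {l : ℝ} (hl : 1 + l ≠ 0) (v : Fin 4 → ℝ) :
    solMat l v ∈ solSpace 4 l := by
  refine mem_solSpace_iff.2 ⟨?_, ?_⟩
  · ext i j
    fin_cases i <;> fin_cases j <;> rfl
  · rw [Ham_four]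
    ext i j
    fin_cases i <;> fin_cases j <;>
      simp [solMat, Matrix.mul_apply, Fin.sum_univ_four] <;> field_simp <;> ring

lemma eq_zero_of_mem_solSpace_of_solCoords_eq_zero {l : ℝ} (hl₁ : 1 + l ≠ 0) (hl₂ : 1 - l ≠ 0)
    {Θ : Matrix (Fin 4) (Fin 4) ℝ} (hΘ : Θ ∈ solSpace 4 l) (h : solCoords Θ = 0) : Θ = 0 := by
  obtain ⟨hsymm, hcomm⟩ := mem_solSpace_iff.1 hΘ
  have h12 : Θ 1 2 = 0 := congrFun h 0
  have h22 : Θ 2 2 = 0 := congrFun h 1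
  have h23 : Θ 2 3 = 0 := congrFun h 2
  have h33 : Θ 3 3 = 0 := congrFun h 3
  rw [Ham_four] at hcomm
  have e := congrFun₂ hcomm
  have e01 := e 0 1; have e02 := e 0 2; have e03 := e 0 3
  have e12 := e 1 2; have e13 := e 1 3; have e23 := e 2 3
  simp only [Matrix.mul_apply, Fin.sum_univ_four, transpose_apply, of_apply, cons_val', cons_val,
    cons_val_zero, cons_val_one, cons_val_fin_one] at e01 e02 e03 e12 e13 e23
  have h13 : Θ 1 3 = 0 := by linear_combination -e23 - (1 + l) * h33 - (l - 1) * h22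
  have h02 : Θ 0 2 = 0 := by
    refine (mul_eq_zero.1 ?_).resolve_left hl₂
    linear_combination e03 + (1 - l) * h13
  have h11 : Θ 1 1 = 0 := by linear_combination e12 + (1 + l) * h02 + h22 - (1 + l) * h13
  have h00 : Θ 0 0 = 0 := by
    refine (mul_eq_zero.1 ?_).resolve_left hl₁
    linear_combination e01 - (l - 1) * h11 - h02
  have h03 : Θ 0 3 = 0 := by
    refine (mul_eq_zero.1 ?_).resolve_left hl₁
    linear_combination -e13 - h23 - (l - 1) * h12
  have h01 : Θ 0 1 = 0 := by linear_combination e02 - (l - 1) * h12 - (1 + l) * h03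
  ext i j
  fin_cases i <;> fin_cases j <;>
    first
      | assumption
      | (rw [← hsymm.apply]; assumption)

theorem stmt12 (l : ℝ) (hl : l ∈ Set.Ioo (-1 : ℝ) 1) :
    Module.finrank ℝ (solSpace 4 l) = 4 := by
  have hl₁ : 1 + l ≠ 0 := by linarith [hl.1]
  have hl₂ : 1 - l ≠ 0 := by linarith [hl.2]
  have hinj : Function.Injective (solCoords.domRestrict (solSpace 4 l)) := by
    refine (injective_iff_map_eq_zero _).2 fun Θ hΘ => ?_
    exact Subtype.ext (eq_zero_of_mem_solSpace_of_solCoords_eq_zero hl₁ hl₂ Θ.2 hΘ)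
  have hsurj : Function.Surjective (solCoords.domRestrict (solSpace 4 l)) :=
    fun v => ⟨⟨solMat l v, solMat_mem_solSpace hl₁ v⟩, solCoords_solMat l v⟩
  rw [(LinearEquiv.ofBijective _ ⟨hinj, hsurj⟩).finrank_eq, Module.finrank_fin_fun]
end

section
/- For λ ∈ ℝ, with γ = (1-λ)/(1+λ²) and δ = 1/(1+λ²), the 6×6 matrix P₃ with nonzero entries P₃(1,3)=P₃(3,1)=P₃(4,6)=P₃(6,4)=γ, P₃(2,2)=P₃(2,4)=P₃(4,2)=P₃(3,5)=P₃(5,3)=P₃(5,5)=δ, P₃(3,3)=P₃(4,4)=1, satisfies H(λ)ᵀ P₃ = P₃ H(λ) with the 6×6 discrete square-well Hamiltonian H(λ). -/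
open Matrix Polynomial

/-- The pseudometric P₃ for N = 6, with γ = (1-λ)/(1+λ²), δ = 1/(1+λ²). -/
noncomputable def P3 (l : ℝ) : Matrix (Fin 6) (Fin 6) ℝ :=
  let γ := (1 - l) / (1 + l ^ 2)
  let δ := 1 / (1 + l ^ 2)
  !![0, 0, γ, 0, 0, 0;
     0, δ, 0, δ, 0, 0;
     γ, 0, 1, 0, δ, 0;
     0, δ, 0, 1, 0, γ;
     0, 0, δ, 0, δ, 0;
     0, 0, 0, γ, 0, 0]

/-! Comparing the entries of `Hᵀ P₃` and `P₃ H` shows that, with `γ` and `δ` treated as free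
parameters, the intertwining relation holds as soon as `γ = (1 - λ) δ` and `(1 + λ) γ + 1 = 2 δ`;
both follow from `δ (1 + λ²) = 1`. -/

theorem ham_six (l : ℝ) : Ham 6 l =
    !![2, -1 - l, 0, 0, 0, 0;
       -1 + l, 2, -1, 0, 0, 0;
       0, -1, 2, -1, 0, 0;
       0, 0, -1, 2, -1, 0;
       0, 0, 0, -1, 2, -1 + l;
       0, 0, 0, 0, -1 - l, 2] := by
  ext i j
  fin_cases i <;> fin_cases j <;> rfl

def squareWellMetric (γ δ : ℝ) : Matrix (Fin 6) (Fin 6) ℝ :=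
  !![0, 0, γ, 0, 0, 0;
     0, δ, 0, δ, 0, 0;
     γ, 0, 1, 0, δ, 0;
     0, δ, 0, 1, 0, γ;
     0, 0, δ, 0, δ, 0;
     0, 0, 0, γ, 0, 0]

theorem ham_six_transpose_mul_squareWellMetric {l γ δ : ℝ} (hγ : γ = (1 - l) * δ)
    (hδ : (1 + l) * γ + 1 = 2 * δ) :
    (Ham 6 l)ᵀ * squareWellMetric γ δ = squareWellMetric γ δ * Ham 6 l := by
  rw [ham_six]
  ext i j
  fin_cases i <;> fin_cases j <;>
    simp [squareWellMetric, Matrix.mul_apply, Fin.sum_univ_six] <;> linarith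

theorem stmt14 (l : ℝ) : (Ham 6 l)ᵀ * P3 l = P3 l * Ham 6 l := by
  have hpos : 1 + l ^ 2 ≠ 0 := by positivity
  refine ham_six_transpose_mul_squareWellMetric (γ := (1 - l) / (1 + l ^ 2))
    (δ := 1 / (1 + l ^ 2)) ?_ ?_
  · field_simp
  · field_simp
    ring
end

section
/- For λ ∈ (-1,1) and γ real with |γ| < 1, the N×N tridiagonal matrix Θ = 2·P₁ - γ·P₂ is positive definite, where P₁ is diagonal with P₁(1,1)=P₁(N,N)=(1-λ)/(1+λ) and 1 elsewhere, and P₂ has P₂(1,2)=P₂(2,1)=P₂(N-1,N)=P₂(N,N-1)=1-λ, P₂(k,k+1)=P₂(k+1,k)=1 for 2≤k≤N-2, and zeros elsewhere. -/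
open Matrix Polynomial

/-- The diagonal metric with first and last entries (1-λ)/(1+λ). -/
noncomputable def Theta (N : ℕ) (l : ℝ) : Matrix (Fin N) (Fin N) ℝ :=
  Matrix.diagonal fun k => if (k : ℕ) = 0 ∨ (k : ℕ) = N - 1 then (1 - l) / (1 + l) else 1

/-- The bidiagonal pseudometric. -/
noncomputable def P2 (N : ℕ) (l : ℝ) : Matrix (Fin N) (Fin N) ℝ :=
  Matrix.of fun i j =>
    if (j : ℕ) = (i : ℕ) + 1 ∨ (i : ℕ) = (j : ℕ) + 1 then
      (if min (i : ℕ) (j : ℕ) = 0 ∨ min (i : ℕ) (j : ℕ) = N - 2 then 1 - l else 1)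
    else 0

/-
The matrix `2 • Θ - g • P₂` is symmetric and tridiagonal, so its quadratic form is a sum over the
edges `(k, k + 1)` of the path of binary forms `p x_k² + q x_{k+1}² - 2 g b_k x_k x_{k+1}`, once the
diagonal is distributed among the edges: each endpoint gives its whole weight `2(1-λ)/(1+λ)` to its
only edge, each interior vertex gives `1` to each of its two edges. Each binary form is positive
definite: on interior edges because `g² < 1`, on the two end edges because
`g²(1-λ)² < 2(1-λ)/(1+λ)`. Every vertex lies on an edge, so the sum is positive for `x ≠ 0`.
-/

lemma Fin.sum_sum_ite_val_eq_val_add_one {M : Type*} [AddCommMonoid M] {m : ℕ}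
    (f : Fin (m + 1) → Fin (m + 1) → M) :
    ∑ i : Fin (m + 1), ∑ j : Fin (m + 1), (if (j : ℕ) = (i : ℕ) + 1 then f i j else 0)
      = ∑ k : Fin m, f k.castSucc k.succ := by
  rw [Fin.sum_univ_castSucc]
  have hlast : ∀ j : Fin (m + 1), ¬ (j : ℕ) = (Fin.last m : ℕ) + 1 := by
    intro j; simp only [Fin.val_last]; omega
  simp only [hlast, if_false, Finset.sum_const_zero, add_zero]
  refine Finset.sum_congr rfl fun k _ => ?_
  have hsucc : ∀ j : Fin (m + 1), ((j : ℕ) = (k.castSucc : ℕ) + 1 ↔ j = k.succ) := by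
    intro j; simp [Fin.ext_iff]
  simp only [hsucc, Finset.sum_ite_eq', Finset.mem_univ, if_true]

section Tridiagonal

variable {R : Type*} [CommSemiring R] {m : ℕ}

lemma Matrix.dotProduct_mulVec_of_tridiagonal {A : Matrix (Fin (m + 1)) (Fin (m + 1)) R}
    (hA : A.IsSymm) (htri : ∀ i j : Fin (m + 1), (i : ℕ) + 1 < j → A i j = 0)
    (x : Fin (m + 1) → R) :
    x ⬝ᵥ A *ᵥ x = ∑ i, A i i * x i ^ 2
      + 2 * ∑ k : Fin m, A k.castSucc k.succ * (x k.castSucc * x k.succ) := by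
  have hentry : ∀ i j, x i * (A i j * x j) = (if i = j then A i i * x i ^ 2 else 0)
      + (if (j : ℕ) = i + 1 then A i j * (x i * x j) else 0)
      + (if (i : ℕ) = j + 1 then A j i * (x j * x i) else 0) := by
    intro i j
    rcases lt_trichotomy (i : ℕ) j with h | h | h
    · rw [if_neg (Fin.ne_of_lt h), if_neg (by omega : ¬ (i : ℕ) = j + 1)]
      split_ifs with hs
      · ring
      · rw [htri i j (by omega)]; ring
    · obtain rfl := Fin.ext h
      have hne : ¬ (i : ℕ) = i + 1 := by omega
      rw [if_pos rfl, if_neg hne]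
      ring
    · rw [if_neg (Fin.ne_of_lt h).symm, if_neg (by omega : ¬ (j : ℕ) = i + 1), hA.apply]
      split_ifs with hs
      · ring
      · rw [htri j i (by omega)]; ring
  simp only [dotProduct, mulVec, Finset.mul_sum, hentry, Finset.sum_add_distrib,
    Finset.sum_ite_eq, Finset.mem_univ, if_true]
  rw [Fin.sum_sum_ite_val_eq_val_add_one, Finset.sum_comm (γ := Fin (m + 1)),
    Fin.sum_sum_ite_val_eq_val_add_one, ← Finset.mul_sum]
  ring

lemma Fin.sum_add_mul_sq_eq_sum_castSucc_succ (P Q x : Fin (m + 1) → R)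
    (hP : P (Fin.last m) = 0) (hQ : Q 0 = 0) :
    ∑ i, (P i + Q i) * x i ^ 2
      = ∑ k : Fin m, (P k.castSucc * x k.castSucc ^ 2 + Q k.succ * x k.succ ^ 2) := by
  simp only [add_mul, Finset.sum_add_distrib]
  rw [Fin.sum_univ_castSucc (fun i => P i * x i ^ 2), Fin.sum_univ_succ (fun i => Q i * x i ^ 2),
    hP, hQ]
  ring

end Tridiagonal

lemma binary_quadratic_pos_of_sq_lt_mul {p q c x y : ℝ} (hp : 0 < p) (hq : 0 < q)
    (h : c ^ 2 < p * q) (hxy : x ≠ 0 ∨ y ≠ 0) : 0 < p * x ^ 2 + q * y ^ 2 + 2 * (c * (x * y)) := by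
  rcases hxy with hx | hy
  · have : 0 < x ^ 2 := by positivity
    nlinarith [sq_nonneg (q * y + c * x)]
  · have : 0 < y ^ 2 := by positivity
    nlinarith [sq_nonneg (p * x + c * y)]

lemma binary_quadratic_nonneg_of_sq_lt_mul {p q c x y : ℝ} (hp : 0 < p) (hq : 0 < q)
    (h : c ^ 2 < p * q) :
    0 ≤ p * x ^ 2 + q * y ^ 2 + 2 * (c * (x * y)) := by
  by_cases hxy : x = 0 ∧ y = 0
  · simp [hxy.1, hxy.2]
  · exact (binary_quadratic_pos_of_sq_lt_mul hp hq h (not_and_or.mp hxy)).le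

theorem Matrix.posDef_of_tridiagonal {m : ℕ} (hm : 0 < m)
    {A : Matrix (Fin (m + 1)) (Fin (m + 1)) ℝ} (hA : A.IsSymm)
    (htri : ∀ i j : Fin (m + 1), (i : ℕ) + 1 < j → A i j = 0)
    (P Q : Fin (m + 1) → ℝ) (hP : P (Fin.last m) = 0) (hQ : Q 0 = 0)
    (hdiag : ∀ i, A i i = P i + Q i) (hPpos : ∀ k : Fin m, 0 < P k.castSucc)
    (hQpos : ∀ k : Fin m, 0 < Q k.succ)
    (hedge : ∀ k : Fin m, A k.castSucc k.succ ^ 2 < P k.castSucc * Q k.succ) :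
    A.PosDef := by
  rw [posDef_iff_dotProduct_mulVec]
  refine ⟨isHermitian_iff_isSymm.mpr hA, fun x hx => ?_⟩
  rw [star_trivial, dotProduct_mulVec_of_tridiagonal hA htri]
  simp only [hdiag]
  rw [Fin.sum_add_mul_sq_eq_sum_castSucc_succ P Q x hP hQ, Finset.mul_sum,
    ← Finset.sum_add_distrib]
  obtain ⟨i, hi⟩ := Function.ne_iff.mp hx
  obtain ⟨k, hk⟩ : ∃ k : Fin m, x k.castSucc ≠ 0 ∨ x k.succ ≠ 0 := by
    rcases Fin.eq_castSucc_or_eq_last i with ⟨k, rfl⟩ | rfl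
    · exact ⟨k, Or.inl hi⟩
    · obtain ⟨m, rfl⟩ : ∃ m', m = m' + 1 := ⟨m - 1, by omega⟩
      exact ⟨Fin.last m, Or.inr (by rwa [Fin.succ_last])⟩
  refine Finset.sum_pos' (fun k _ => ?_) ⟨k, Finset.mem_univ k, ?_⟩
  · exact binary_quadratic_nonneg_of_sq_lt_mul (hPpos k) (hQpos k) (hedge k)
  · exact binary_quadratic_pos_of_sq_lt_mul (hPpos k) (hQpos k) (hedge k) hk

lemma P2_isSymm (N : ℕ) (l : ℝ) : (P2 N l).IsSymm := by
  ext i j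
  simp only [transpose_apply, P2, of_apply, or_comm, min_comm]

lemma P2_apply_eq_zero {N : ℕ} (l : ℝ) {i j : Fin N} (h : ¬ ((j : ℕ) = i + 1 ∨ (i : ℕ) = j + 1)) :
    P2 N l i j = 0 := by
  simp only [P2, of_apply, if_neg h]

lemma P2_apply_castSucc_succ {m : ℕ} (l : ℝ) (k : Fin m) :
    P2 (m + 1) l k.castSucc k.succ = if (k : ℕ) = 0 ∨ (k : ℕ) + 1 = m then 1 - l else 1 := by
  simp only [P2, of_apply, Fin.val_castSucc, Fin.val_succ, true_or, if_true,
    min_eq_left (Nat.le_succ _)]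
  split_ifs <;> first | rfl | omega

section ThetaSubP2

variable {N : ℕ} (l g : ℝ)

lemma isSymm_two_smul_Theta_sub_smul_P2 : ((2 : ℝ) • Theta N l - g • P2 N l).IsSymm :=
  ((isSymm_diagonal _).smul 2).sub ((P2_isSymm N l).smul g)

lemma two_smul_Theta_sub_smul_P2_apply_self (i : Fin N) :
    ((2 : ℝ) • Theta N l - g • P2 N l) i i
      = 2 * if (i : ℕ) = 0 ∨ (i : ℕ) = N - 1 then (1 - l) / (1 + l) else 1 := by
  simp [Theta, P2_apply_eq_zero l (i := i) (j := i) (by omega)]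

lemma two_smul_Theta_sub_smul_P2_apply_of_lt {i j : Fin N} (h : (i : ℕ) + 1 < j) :
    ((2 : ℝ) • Theta N l - g • P2 N l) i j = 0 := by
  simp [Theta, Fin.ne_of_lt (show i < j by omega), P2_apply_eq_zero l (i := i) (j := j) (by omega)]

lemma two_smul_Theta_sub_smul_P2_apply_castSucc_succ {m : ℕ} (k : Fin m) :
    ((2 : ℝ) • Theta (m + 1) l - g • P2 (m + 1) l) k.castSucc k.succ
      = -(g * if (k : ℕ) = 0 ∨ (k : ℕ) + 1 = m then 1 - l else 1) := by
  simp [Theta, (Fin.castSucc_lt_succ (i := k)).ne, P2_apply_castSucc_succ]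

end ThetaSubP2

lemma sq_mul_one_sub_lt_two_mul_div {l g : ℝ} (hl : l ∈ Set.Ioo (-1 : ℝ) 1) (hg : |g| < 1) :
    (g * (1 - l)) ^ 2 < 2 * ((1 - l) / (1 + l)) := by
  obtain ⟨hl₁, hl₂⟩ := hl
  have hg2 : g ^ 2 < 1 := (sq_lt_one_iff_abs_lt_one g).mpr hg
  have hpos : 0 < (1 - l) ^ 2 * (1 + l) := by
    have : 0 < 1 - l := by linarith
    have : 0 < 1 + l := by linarith
    positivity
  have hle : (1 - l) ^ 2 * (1 + l) < 2 * (1 - l) := by nlinarith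
  rw [mul_div_assoc', lt_div_iff₀ (by linarith)]
  nlinarith

theorem stmt16 (N : ℕ) (hN : 3 ≤ N) (l : ℝ) (hl : l ∈ Set.Ioo (-1 : ℝ) 1)
    (g : ℝ) (hg : |g| < 1) :
    ((2 : ℝ) • Theta N l - g • P2 N l).PosDef := by
  obtain ⟨m, rfl⟩ : ∃ m, N = m + 1 := ⟨N - 1, by omega⟩
  set α := (1 - l) / (1 + l)
  have hα : 0 < α := div_pos (by linarith [hl.2]) (by linarith [hl.1])
  have hg2 : g ^ 2 < 1 := (sq_lt_one_iff_abs_lt_one g).mpr hg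
  have hend := sq_mul_one_sub_lt_two_mul_div hl hg
  refine posDef_of_tridiagonal (by omega) (isSymm_two_smul_Theta_sub_smul_P2 l g)
    (fun i j => two_smul_Theta_sub_smul_P2_apply_of_lt l g)
    (fun i => if (i : ℕ) = 0 then 2 * α else if (i : ℕ) = m then 0 else 1)
    (fun i => if (i : ℕ) = m then 2 * α else if (i : ℕ) = 0 then 0 else 1)
    (by simp only [Fin.val_last, show m ≠ 0 by omega, ↓reduceIte])
    (by simp only [Fin.val_zero, show 0 ≠ m by omega, ↓reduceIte]) (fun i => ?_) (fun k => ?_) (fun k => ?_) (fun k => ?_)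
  · rw [two_smul_Theta_sub_smul_P2_apply_self]
    split_ifs <;> first | omega | ring
  · simp only [Fin.val_castSucc]
    split_ifs <;> first | contradiction | omega | positivity
  · simp only [Fin.val_succ]
    split_ifs <;> first | contradiction | omega | positivity
  · rw [two_smul_Theta_sub_smul_P2_apply_castSucc_succ, neg_sq]
    simp only [Fin.val_castSucc, Fin.val_succ]
    split_ifs <;> first | contradiction | omega | linarith
end
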